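/- Let n = 2 and let S be a Hermitian 2×2 complex matrix (S = conj(S)ᵀ), and set M := ((E,0),(S,E)) ∈ U(2,2), where E is the 2×2 identity, and I := ((0,−E),(E,0)). Then w(M,I) = −1 if tr(S) > 0, and w(M,I) = 0 if tr(S) ≤ 0. -/

import Mathlib

noncomputable section
open Matrix Complex
open scoped ComplexOrder

/-- Complex 2n×2n matrices, written in n×n blocks. -/
abbrev HMat (n : ℕ) : Type := Matrix (Fin n ⊕ Fin n) (Fin n ⊕ Fin n) ℂ

/-- The standard alternating matrix I = ((0,-E),(E,0)). -/
def Imat (n : ℕ) : HMat n := Matrix.fromBlocks 0 (-1) 1 0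

/-- The unitary group U(n,n). -/
def UGrp (n : ℕ) : Set (HMat n) := {M | Mᴴ * Imat n * M = Imat n}

/-- The Hermitian upper half-plane: Z = X + iY with X Hermitian and
Y = (Z - Zᴴ)/(2i) Hermitian positive definite. -/
def UHP (n : ℕ) : Set (Matrix (Fin n) (Fin n) ℂ) :=
  {Z | ((2 * Complex.I)⁻¹ • (Z - Zᴴ)).PosDef}

/-- The action M⟨Z⟩ = (AZ+B)(CZ+D)⁻¹. -/
def matAct {n : ℕ} (M : HMat n) (Z : Matrix (Fin n) (Fin n) ℂ) :
    Matrix (Fin n) (Fin n) ℂ :=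
  (M.toBlocks₁₁ * Z + M.toBlocks₁₂) * (M.toBlocks₂₁ * Z + M.toBlocks₂₂)⁻¹

/-- The automorphy factor J(M,Z) = det(CZ+D). -/
def Jfac {n : ℕ} (M : HMat n) (Z : Matrix (Fin n) (Fin n) ℂ) : ℂ :=
  (M.toBlocks₂₁ * Z + M.toBlocks₂₂).det

/-- The distinguished point iE of the upper half-plane. -/
def iE (n : ℕ) : Matrix (Fin n) (Fin n) ℂ := Complex.I • 1

/-- `L` is the continuous choice of the argument of J(M,Z), normalized so that
`L M (iE)` is the principal value. -/
def IsArgOfJ (n : ℕ) (L : HMat n → Matrix (Fin n) (Fin n) ℂ → ℝ) : Prop :=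
  ∀ M ∈ UGrp n, ContinuousOn (L M) (UHP n) ∧
    (∀ Z ∈ UHP n,
      Complex.exp (Complex.I * (L M Z : ℝ)) = Jfac M Z / (‖Jfac M Z‖ : ℂ)) ∧
    L M (iE n) ∈ Set.Ioc (-Real.pi) Real.pi

/-- w(M,N;Z) = (1/2π)(L(MN,Z) - L(M,N⟨Z⟩) - L(N,Z)). -/
def wAt {n : ℕ} (L : HMat n → Matrix (Fin n) (Fin n) ℂ → ℝ)
    (M N : HMat n) (Z : Matrix (Fin n) (Fin n) ℂ) : ℝ :=
  (L (M * N) Z - L M (matAct N Z) - L N Z) / (2 * Real.pi)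

/-- The cocycle w(M,N), i.e. the common value of w(M,N;Z), evaluated at Z = iE. -/
def wcoc {n : ℕ} (L : HMat n → Matrix (Fin n) (Fin n) ℂ → ℝ) (M N : HMat n) : ℝ :=
  wAt L M N (iE n)

open scoped Real

/-!
Put `u := det (E + iS)`. At `Z = iE` the three automorphy factors are `J(M, iE) = u`,
`J(MI, iE) = det (iE - S) = i² u = -u` and `J(I, iE) = det (iE) = -1`, and `I` fixes `iE`.
Since `L` is the principal argument at `iE`, `w(M, I) = (arg (-u) - arg u - π) / 2π`, which is
`-1` when `arg (-u) = arg u - π` and `0` when `arg (-u) = arg u + π`. For Hermitian `S`,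
`u = (1 - s₁₁ s₂₂ + |s₁₂|²) + i tr S`, and when `tr S = 0` its real part `1 + s₁₁² + |s₁₂|²`
is positive; so the sign of `tr S` decides which case occurs.
-/

lemma eq_arg_of_exp_I_mul_eq_div_norm {θ : ℝ} {u : ℂ} (hθ : θ ∈ Set.Ioc (-π) π)
    (h : exp (I * θ) = u / (‖u‖ : ℂ)) : θ = arg u := by
  have hu : u ≠ 0 := by
    rintro rfl
    simp [exp_ne_zero] at h
  have hdiv : u / (‖u‖ : ℂ) = ((‖u‖⁻¹ : ℝ) : ℂ) * u := by push_cast; ring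
  rw [← arg_real_mul u (inv_pos.mpr (norm_pos_iff.mpr hu)), ← hdiv, ← h, mul_comm, exp_mul_I,
    arg_cos_add_sin_mul_I hθ]

lemma Imat_mem_UGrp (n : ℕ) : Imat n ∈ UGrp n := by
  simp [UGrp, Imat, fromBlocks_conjTranspose, fromBlocks_multiply]

lemma mul_mem_UGrp {n : ℕ} {A B : HMat n} (hA : A ∈ UGrp n) (hB : B ∈ UGrp n) : A * B ∈ UGrp n := by
  simp only [UGrp, Set.mem_ofPred_eq] at *
  rw [conjTranspose_mul, show Bᴴ * Aᴴ * Imat n * (A * B) = Bᴴ * (Aᴴ * Imat n * A) * B by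
    noncomm_ring, hA, hB]

lemma fromBlocks_one_zero_mem_UGrp {n : ℕ} {S : Matrix (Fin n) (Fin n) ℂ} (hS : Sᴴ = S) :
    (fromBlocks 1 0 S 1 : HMat n) ∈ UGrp n := by
  simp [UGrp, fromBlocks_conjTranspose, fromBlocks_multiply, Imat, hS]

lemma iE_mem_UHP (n : ℕ) : iE n ∈ UHP n := by
  have hY : (2 * I)⁻¹ • (iE n - (iE n)ᴴ) = 1 := by
    have h2I : I - star I = 2 * I := by rw [star_def, conj_I]; ring
    rw [iE, conjTranspose_smul, conjTranspose_one, ← sub_smul, h2I, smul_smul,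
      inv_mul_cancel₀ (by simp), one_smul]
  rw [UHP, Set.mem_ofPred_eq, hY]
  exact PosDef.one

lemma matAct_Imat_iE (n : ℕ) : matAct (Imat n) (iE n) = iE n := by
  have hinv : (I • (1 : Matrix (Fin n) (Fin n) ℂ))⁻¹ = (-I) • 1 := by
    apply inv_eq_right_inv
    rw [smul_mul_smul_comm, one_mul, mul_neg, I_mul_I, neg_neg, one_smul]
  simp [matAct, Imat, iE, hinv]

lemma Jfac_Imat_iE (n : ℕ) : Jfac (Imat n) (iE n) = I ^ n := by
  simp [Jfac, Imat, iE]

lemma Jfac_fromBlocks_one_zero_iE {n : ℕ} (S : Matrix (Fin n) (Fin n) ℂ) :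
    Jfac (fromBlocks 1 0 S 1 : HMat n) (iE n) = det (1 + I • S) := by
  rw [Jfac, toBlocks_fromBlocks₂₁, toBlocks_fromBlocks₂₂, iE, Matrix.mul_smul, mul_one,
    add_comm]

lemma Jfac_fromBlocks_one_zero_mul_Imat_iE {n : ℕ} (S : Matrix (Fin n) (Fin n) ℂ) :
    Jfac ((fromBlocks 1 0 S 1 : HMat n) * Imat n) (iE n) = I ^ n * det (1 + I • S) := by
  have hblocks : (fromBlocks 1 0 S 1 : HMat n) * Imat n = fromBlocks 0 (-1) 1 (-S) := by
    simp [Imat, fromBlocks_multiply]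
  have hfac : iE n + -S = I • (1 + I • S) := by
    rw [iE, smul_add, smul_smul, I_mul_I, neg_one_smul]
  rw [hblocks, Jfac, toBlocks_fromBlocks₂₁, toBlocks_fromBlocks₂₂, one_mul, hfac, det_smul,
    Fintype.card_fin]

lemma IsArgOfJ.apply_iE {n : ℕ} {L : HMat n → Matrix (Fin n) (Fin n) ℂ → ℝ}
    (hL : IsArgOfJ n L) {M : HMat n} (hM : M ∈ UGrp n) : L M (iE n) = arg (Jfac M (iE n)) :=
  eq_arg_of_exp_I_mul_eq_div_norm (hL M hM).2.2 ((hL M hM).2.1 _ (iE_mem_UHP n))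

lemma wcoc_fromBlocks_one_zero_Imat {n : ℕ} {L : HMat n → Matrix (Fin n) (Fin n) ℂ → ℝ}
    (hL : IsArgOfJ n L) {S : Matrix (Fin n) (Fin n) ℂ} (hS : Sᴴ = S) :
    wcoc L (fromBlocks 1 0 S 1) (Imat n) =
      (arg (I ^ n * det (1 + I • S)) - arg (det (1 + I • S)) - arg (I ^ n)) / (2 * π) := by
  have hM := fromBlocks_one_zero_mem_UGrp hS
  rw [wcoc, wAt, matAct_Imat_iE, hL.apply_iE (mul_mem_UGrp hM (Imat_mem_UGrp n)), hL.apply_iE hM,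
    hL.apply_iE (Imat_mem_UGrp n), Jfac_fromBlocks_one_zero_mul_Imat_iE,
    Jfac_fromBlocks_one_zero_iE, Jfac_Imat_iE]

section FinTwo

variable {S : Matrix (Fin 2) (Fin 2) ℂ}

lemma det_one_add_I_smul_fin_two (hS : Sᴴ = S) :
    det (1 + I • S) = ⟨1 - (S 0 0).re * (S 1 1).re + normSq (S 0 1), S.trace.re⟩ := by
  have hdiag (i : Fin 2) : (S i i).im = 0 := by
    rw [← conj_eq_iff_im, ← star_def, ← conjTranspose_apply, hS]
  have hoff : S 1 0 = star (S 0 1) := by rw [← conjTranspose_apply, hS]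
  rw [det_fin_two, trace_fin_two]
  apply Complex.ext <;> simp [hoff, hdiag, normSq_apply] <;> ring

lemma re_det_one_add_I_smul_pos (hS : Sᴴ = S) (htr : S.trace.re = 0) :
    0 < (det (1 + I • S)).re := by
  rw [det_one_add_I_smul_fin_two hS]
  have hd : (S 1 1).re = -(S 0 0).re := by
    rw [trace_fin_two, add_re] at htr
    linarith
  simp only [hd]
  nlinarith [normSq_nonneg (S 0 1), sq_nonneg (S 0 0).re]

lemma im_det_one_add_I_smul (hS : Sᴴ = S) : (det (1 + I • S)).im = S.trace.re := by
  rw [det_one_add_I_smul_fin_two hS]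

end FinTwo

theorem stmt7 (L : HMat 2 → Matrix (Fin 2) (Fin 2) ℂ → ℝ) (hL : IsArgOfJ 2 L)
    (S : Matrix (Fin 2) (Fin 2) ℂ) (hS : Sᴴ = S)
    (M : HMat 2) (hM : M = Matrix.fromBlocks 1 0 S 1) :
    (0 < S.trace.re → wcoc L M (Imat 2) = -1) ∧
    (S.trace.re ≤ 0 → wcoc L M (Imat 2) = 0) := by
  subst hM
  set u := det (1 + I • S)
  have hw : wcoc L (fromBlocks 1 0 S 1) (Imat 2) = (arg (-u) - arg u - π) / (2 * π) := by
    simpa [I_sq] using wcoc_fromBlocks_one_zero_Imat hL hS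
  have hpi : 2 * π ≠ 0 := by positivity
  refine ⟨fun htr => ?_, fun htr => ?_⟩
  · have harg : arg (-u) = arg u - π :=
      arg_neg_eq_arg_sub_pi_of_im_pos (by rwa [im_det_one_add_I_smul hS])
    rw [hw, harg, div_eq_iff hpi]
    ring
  · have harg : arg (-u) = arg u + π := by
      refine arg_neg_eq_arg_add_pi_iff.2 ?_
      rw [im_det_one_add_I_smul hS]
      rcases htr.lt_or_eq with hneg | hzero
      · exact .inl hneg
      · exact .inr ⟨hzero, re_det_one_add_I_smul_pos hS hzero⟩
    rw [hw, harg, div_eq_iff hpi]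
    ring
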